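/- Let Fe, Fp : ℝ³ → Matrix (Fin 3) (Fin 3) ℝ be continuously differentiable matrix fields and suppose there exists a twice continuously differentiable map φ : ℝ³ → ℝ³ such that (Fe·Fp)(x) equals the Jacobian matrix of φ at x for every x (i.e., the total deformation F = Fe·Fp is compatible). Then for every x ∈ ℝ³, Fe(x)·(Fp×∇)(x) + Σ_{m=1}^{3} ((∂_m Fe)(x)·Fp(x)) × e_m = 0, where for a matrix M and standard basis vector e_m, (M×e_m)_{ij} = Σ_l ε_{jlm} M_{il}. -/

import Mathlib

/-- Levi-Civita symbol on three indices. -/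
noncomputable def eps (i j k : Fin 3) : ℝ :=
  (((j : ℕ) : ℝ) - ((i : ℕ) : ℝ)) * (((k : ℕ) : ℝ) - ((i : ℕ) : ℝ)) *
    (((k : ℕ) : ℝ) - ((j : ℕ) : ℝ)) / 2

/-- Partial derivative in the `k`-th standard coordinate direction. -/
noncomputable def pd (k : Fin 3) (f : EuclideanSpace ℝ (Fin 3) → ℝ)
    (x : EuclideanSpace ℝ (Fin 3)) : ℝ :=
  fderiv ℝ f x (EuclideanSpace.single k 1)

/-- The curl `T×∇` of a matrix field, `(T×∇)_{ij} = Σ_{k,l} ε_{jlk} ∂_k T_{il}`. -/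
noncomputable def mcurl (T : EuclideanSpace ℝ (Fin 3) → Matrix (Fin 3) (Fin 3) ℝ)
    (x : EuclideanSpace ℝ (Fin 3)) : Matrix (Fin 3) (Fin 3) ℝ :=
  Matrix.of fun i j => ∑ k, ∑ l, eps j l k * pd k (fun y => T y i l) x

/-- Cross product of a matrix with the `m`-th standard basis vector:
`(M×e_m)_{ij} = Σ_l ε_{jlm} M_{il}`. -/
noncomputable def crossE (M : Matrix (Fin 3) (Fin 3) ℝ) (m : Fin 3) :
    Matrix (Fin 3) (Fin 3) ℝ :=
  Matrix.of fun i j => ∑ l, eps j l m * M i l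

/-- The entrywise partial derivative `∂_m T` of a matrix field. -/
noncomputable def mpd (m : Fin 3) (T : EuclideanSpace ℝ (Fin 3) → Matrix (Fin 3) (Fin 3) ℝ)
    (x : EuclideanSpace ℝ (Fin 3)) : Matrix (Fin 3) (Fin 3) ℝ :=
  Matrix.of fun i l => pd m (fun y => T y i l) x

/-! The Jacobian of `φ` has vanishing curl because second partials commute while `ε` is
antisymmetric; expanding the curl of `Fe·Fp` by the Leibniz rule then gives the constraint. -/

open Finset

lemma eps_swap (j k l : Fin 3) : eps j k l = -eps j l k := by
  unfold eps; ring

lemma sum_eps_mul_eq_zero_of_symm (j : Fin 3) {D : Fin 3 → Fin 3 → ℝ}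
    (hD : ∀ k l, D k l = D l k) : ∑ k, ∑ l, eps j l k * D k l = 0 := by
  have hneg : ∑ k, ∑ l, eps j l k * D k l = -∑ k, ∑ l, eps j l k * D k l :=
    calc ∑ k, ∑ l, eps j l k * D k l = ∑ l, ∑ k, eps j l k * D k l := sum_comm
      _ = ∑ l, ∑ k, -(eps j k l * D l k) := by
          refine sum_congr rfl fun l _ => sum_congr rfl fun k _ => ?_
          rw [eps_swap j k l, hD l k, neg_mul, neg_neg]
      _ = -∑ k, ∑ l, eps j l k * D k l := by simp only [sum_neg_distrib]
  linarith

section PartialDerivatives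

variable {x : EuclideanSpace ℝ (Fin 3)}

lemma pd_fun_sum {ι : Type*} (s : Finset ι) {f : ι → EuclideanSpace ℝ (Fin 3) → ℝ}
    (hf : ∀ a ∈ s, DifferentiableAt ℝ (f a) x) (k : Fin 3) :
    pd k (fun y => ∑ a ∈ s, f a y) x = ∑ a ∈ s, pd k (f a) x := by
  simp only [pd, fderiv_fun_sum hf, FunLike.coe_sum, Finset.sum_apply]

lemma pd_fun_mul {f g : EuclideanSpace ℝ (Fin 3) → ℝ}
    (hf : DifferentiableAt ℝ f x) (hg : DifferentiableAt ℝ g x) (k : Fin 3) :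
    pd k (fun y => f y * g y) x = pd k f x * g x + f x * pd k g x := by
  simp only [pd, fderiv_fun_mul hf hg, add_apply, smul_apply, smul_eq_mul]
  ring

lemma pd_matrix_mul_apply {m n p : Type*} [Fintype n]
    {A : EuclideanSpace ℝ (Fin 3) → Matrix m n ℝ} {B : EuclideanSpace ℝ (Fin 3) → Matrix n p ℝ}
    (hA : ∀ i a, DifferentiableAt ℝ (fun y => A y i a) x)
    (hB : ∀ a l, DifferentiableAt ℝ (fun y => B y a l) x) (k : Fin 3) (i : m) (l : p) :
    pd k (fun y => (A y * B y) i l) x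
      = ∑ a, (pd k (fun y => A y i a) x * B x a l + A x i a * pd k (fun y => B y a l) x) := by
  simp only [Matrix.mul_apply]
  rw [pd_fun_sum (f := fun a y => A y i a * B y a l) _ fun a _ => (hA i a).fun_mul (hB a l)]
  exact sum_congr rfl fun a _ => pd_fun_mul (hA i a) (hB a l) k

lemma pd_pd_comm {g : EuclideanSpace ℝ (Fin 3) → ℝ} (hg : ContDiff ℝ 2 g) (k l : Fin 3) :
    pd k (pd l g) x = pd l (pd k g) x := by
  have hdiff : DifferentiableAt ℝ (fderiv ℝ g) x :=
    (hg.fderiv_right le_rfl).differentiable one_ne_zero x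
  have hsymm : IsSymmSndFDerivAt ℝ g x := hg.contDiffAt.isSymmSndFDerivAt (by simp)
  have hpd : ∀ v w : EuclideanSpace ℝ (Fin 3),
      fderiv ℝ (fun y => fderiv ℝ g y v) x w = fderiv ℝ (fderiv ℝ g) x w v := fun v w => by
    rw [fderiv_clm_apply hdiff (differentiableAt_const v)]
    simp
  change fderiv ℝ (fun y => fderiv ℝ g y _) x _ = fderiv ℝ (fun y => fderiv ℝ g y _) x _
  rw [hpd, hpd, hsymm]

end PartialDerivatives

lemma mcurl_eq_zero_of_eq_pd {T : EuclideanSpace ℝ (Fin 3) → Matrix (Fin 3) (Fin 3) ℝ}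
    {g : Fin 3 → EuclideanSpace ℝ (Fin 3) → ℝ} (hg : ∀ i, ContDiff ℝ 2 (g i))
    (hT : ∀ y i l, T y i l = pd l (g i) y) (x : EuclideanSpace ℝ (Fin 3)) :
    mcurl T x = 0 := by
  ext i j
  have hTi : ∀ l, (fun y => T y i l) = pd l (g i) := fun l => funext fun y => hT y i l
  simp only [mcurl, Matrix.of_apply, Matrix.zero_apply, hTi]
  exact sum_eps_mul_eq_zero_of_symm j fun k l => pd_pd_comm (hg i) k l

lemma mcurl_mul {A B : EuclideanSpace ℝ (Fin 3) → Matrix (Fin 3) (Fin 3) ℝ}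
    {x : EuclideanSpace ℝ (Fin 3)}
    (hA : ∀ i a, DifferentiableAt ℝ (fun y => A y i a) x)
    (hB : ∀ a l, DifferentiableAt ℝ (fun y => B y a l) x) :
    mcurl (fun y => A y * B y) x = A x * mcurl B x + ∑ m, crossE (mpd m A x * B x) m := by
  ext i j
  simp only [mcurl, Matrix.of_apply, pd_matrix_mul_apply hA hB]
  simp only [crossE, mpd, Matrix.of_apply, Matrix.add_apply, Matrix.mul_apply, Fin.sum_univ_three]
  ring

/-- Eq. (6) of the paper: expanding `Inc(Fe·Fp) = 0` by the Leibniz rule gives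
`Fe·(Fp×∇) + Σ_m ((∂_m Fe)·Fp) × e_m = 0` when the total deformation is compatible. -/
theorem inc_decomposition_constraint
    (Fe Fp : EuclideanSpace ℝ (Fin 3) → Matrix (Fin 3) (Fin 3) ℝ)
    (hFe : ∀ i l, ContDiff ℝ 1 (fun x => Fe x i l))
    (hFp : ∀ i l, ContDiff ℝ 1 (fun x => Fp x i l))
    (φ : EuclideanSpace ℝ (Fin 3) → EuclideanSpace ℝ (Fin 3)) (hφ : ContDiff ℝ 2 φ)
    (hcompat : ∀ x i j, (Fe x * Fp x) i j = pd j (fun z => φ z i) x)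
    (x : EuclideanSpace ℝ (Fin 3)) :
    Fe x * mcurl Fp x + ∑ m, crossE (mpd m Fe x * Fp x) m = 0 := by
  have hφi : ∀ i, ContDiff ℝ 2 (fun z => φ z i) := fun i =>
    (EuclideanSpace.proj (𝕜 := ℝ) i).contDiff.comp hφ
  rw [← mcurl_mul (fun i l => (hFe i l).differentiable one_ne_zero x)
    (fun i l => (hFp i l).differentiable one_ne_zero x)]
  exact mcurl_eq_zero_of_eq_pd hφi hcompat x
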